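/- Let ξ ∈ 𝔽_q((T^{-1})) be irrational with |ξ| ≤ 1, let x = (ξ, 1)ᵀ, and let P_k/Q_k denote the continued fraction convergents to ξ. If γ ∈ SL₂(𝔽_q[T]) satisfies |γ| < |Q_{k+1}|, then |γx| ≥ 1/|Q_k|. -/

import Mathlib

open Polynomial Filter
open scoped Classical ENNReal

noncomputable section

variable (Fq : Type) [Field Fq] [Fintype Fq]

/-- The element `T` inside the Laurent-series field `𝔽_q((T⁻¹))`, which we realize
as the field of Hahn/Laurent series in the variable `T⁻¹`. -/
def Tel : LaurentSeries Fq := HahnSeries.single (-1 : ℤ) 1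

/-- The inverse variable `T⁻¹` itself. -/
def TinvEl : LaurentSeries Fq := HahnSeries.single (1 : ℤ) 1

/-- The embedding of the polynomial ring `𝔽_q[T]` into `𝔽_q((T⁻¹))`,
sending `T` to `Tel`. -/
def polyToL (P : Polynomial Fq) : LaurentSeries Fq :=
  Polynomial.eval₂ HahnSeries.C (Tel Fq) P

/-- The absolute value `|x| = q ^ (deg x)` on `𝔽_q((T⁻¹))`, with `|0| = 0`.
Here the degree of `x ≠ 0` is minus the order of `x` as a series in `T⁻¹`. -/
def labs (x : LaurentSeries Fq) : ℝ :=
  if x = 0 then 0 else (Fintype.card Fq : ℝ) ^ (-x.order)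

/-- `‖x‖`: the distance from `x` to the nearest polynomial. -/
def lnorm (x : LaurentSeries Fq) : ℝ :=
  ⨅ P : Polynomial Fq, labs Fq (x - polyToL Fq P)

/-- `x ∈ 𝔽_q(T)`, i.e. `x` is rational. -/
def IsRat (x : LaurentSeries Fq) : Prop :=
  ∃ P Q : Polynomial Fq, Q ≠ 0 ∧ polyToL Fq Q * x = polyToL Fq P


/-- `SL₂(𝔽_q[T])`. -/
abbrev SL2 := Matrix.SpecialLinearGroup (Fin 2) (Polynomial Fq)

/-- Maximum of the absolute values of the entries of a `2 × 2` matrix. -/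
def matAbs (M : Matrix (Fin 2) (Fin 2) (LaurentSeries Fq)) : ℝ :=
  max (max (labs Fq (M 0 0)) (labs Fq (M 0 1))) (max (labs Fq (M 1 0)) (labs Fq (M 1 1)))

/-- The size `|γ|` of a matrix `γ ∈ SL₂(𝔽_q[T])`. -/
def gabs (γ : SL2 Fq) : ℝ :=
  matAbs Fq (((γ : Matrix (Fin 2) (Fin 2) (Polynomial Fq))).map (polyToL Fq))

/-- Maximum of the absolute values of the coordinates of a vector. -/
def vabs (v : Fin 2 → LaurentSeries Fq) : ℝ :=
  max (labs Fq (v 0)) (labs Fq (v 1))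

/-- The standard linear action of `SL₂(𝔽_q[T])` on `𝔽_q((T⁻¹))²`. -/
def act (γ : SL2 Fq) (v : Fin 2 → LaurentSeries Fq) : Fin 2 → LaurentSeries Fq :=
  (((γ : Matrix (Fin 2) (Fin 2) (Polynomial Fq))).map (polyToL Fq)).mulVec v

/-- The asymptotic Diophantine exponent `μ(x, y)` (as an element of `ℝ≥0∞`). -/
def muExp (x y : Fin 2 → LaurentSeries Fq) : ℝ≥0∞ :=
  ⨆ m ∈ {m : ℝ |
      {γ : SL2 Fq | vabs Fq (act Fq γ x - y) ≤ gabs Fq γ ^ (-m)}.Infinite},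
    ENNReal.ofReal m

/-- The uniform Diophantine exponent `μ̂(x, y)` (as an element of `ℝ≥0∞`). -/
def muHatExp (x y : Fin 2 → LaurentSeries Fq) : ℝ≥0∞ :=
  ⨆ m ∈ {m : ℝ | ∀ᶠ H : ℝ in atTop, ∃ γ : SL2 Fq,
      gabs Fq γ ≤ H ∧ vabs Fq (act Fq γ x - y) ≤ H ^ (-m)},
    ENNReal.ofReal m

/-- The irrationality exponent `ω(ξ)` (as an element of `ℝ≥0∞`). -/
def omegaExp (ξ : LaurentSeries Fq) : ℝ≥0∞ :=
  ⨆ w ∈ {w : ℝ |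
      {Q : Polynomial Fq | Q ≠ 0 ∧
        lnorm Fq (polyToL Fq Q * ξ) ≤ labs Fq (polyToL Fq Q) ^ (-w)}.Infinite},
    ENNReal.ofReal w

/-- Numerators `P_n` of the continued-fraction convergents associated with
partial quotients `C 0 = A₀, C 1 = A₁, …`; indices are shifted by `2`, so that
`cfNum C 0 = P₋₂ = 0`, `cfNum C 1 = P₋₁ = 1`, and `cfNum C (n + 2) = Pₙ`. -/
def cfNum (C : ℕ → Polynomial Fq) : ℕ → Polynomial Fq
  | 0 => 0
  | 1 => 1
  | n + 2 => C n * cfNum C (n + 1) + cfNum C n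

/-- Denominators `Q_n` of the continued-fraction convergents, with
`cfDen C 0 = Q₋₂ = 1`, `cfDen C 1 = Q₋₁ = 0`, and `cfDen C (n + 2) = Qₙ`. -/
def cfDen (C : ℕ → Polynomial Fq) : ℕ → Polynomial Fq
  | 0 => 1
  | 1 => 0
  | n + 2 => C n * cfDen C (n + 1) + cfDen C n

/-- `ξ` has continued-fraction expansion `[C 0; C 1, C 2, …]`, expressed by the
characteristic property `|Qₙ ξ − Pₙ| = |Q_{n+1}|⁻¹` of the convergents. -/
def HasCF (ξ : LaurentSeries Fq) (C : ℕ → Polynomial Fq) : Prop :=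
  ∀ n : ℕ, labs Fq (polyToL Fq (cfDen Fq C (n + 2)) * ξ - polyToL Fq (cfNum Fq C (n + 2)))
    = (labs Fq (polyToL Fq (cfDen Fq C (n + 3))))⁻¹

/-- The convergent matrix `M_k` with rows `(Q_k, −P_k)` and
`((−1)^(k−1) Q_{k−1}, (−1)^k P_{k−1})`. -/
def cfM (C : ℕ → Polynomial Fq) (k : ℕ) : Matrix (Fin 2) (Fin 2) (Polynomial Fq) :=
  !![cfDen Fq C (k + 2), -cfNum Fq C (k + 2);
     (-1 : Polynomial Fq) ^ (k + 1) * cfDen Fq C (k + 1), (-1 : Polynomial Fq) ^ k * cfNum Fq C (k + 1)]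

/-- The unipotent matrix `U(a)`. -/
def Umat (a : Polynomial Fq) : Matrix (Fin 2) (Fin 2) (Polynomial Fq) :=
  !![1, a; 0, 1]


/-!
Let `M_k ∈ SL₂(𝔽_q[T])` have rows `(Q_k, -P_k)` and `((-1)^(k+1) Q_{k-1}, (-1)^k P_{k-1})`,
so that `M_k (ξ, 1)ᵀ = (u, w)` with `|u| = 1/|Q_{k+1}|` and `|w| = 1/|Q_k|`. Write `γ = D M_k`
and pick a row `(r, s)` of `D` with `s ≠ 0`. The matching coordinate of `γ (ξ, 1)ᵀ` is
`r u + s w`, and the matching first-column entry of `γ` is `r Q_k ± s Q_{k-1}`, of absolute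
value `< |Q_{k+1}|`. If `|r u| ≠ |s w|`, the ultrametric inequality gives
`|r u + s w| ≥ |s w| ≥ 1/|Q_k|`. If `|r u| = |s w|`, then `|r Q_k| = |s| |Q_{k+1}|` dominates
`|s Q_{k-1}|`, contradicting `|γ| < |Q_{k+1}|`.
-/

section LaurentAbs

variable {Fq : Type} [Field Fq] [Fintype Fq]

lemma one_lt_card_real : (1 : ℝ) < Fintype.card Fq := by
  exact_mod_cast Fintype.one_lt_card

lemma labs_zero : labs Fq 0 = 0 := if_pos rfl

lemma labs_of_ne_zero {x : LaurentSeries Fq} (hx : x ≠ 0) :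
    labs Fq x = (Fintype.card Fq : ℝ) ^ (-x.order) := if_neg hx

lemma labs_nonneg (x : LaurentSeries Fq) : 0 ≤ labs Fq x := by
  unfold labs; split_ifs <;> positivity

lemma labs_one : labs Fq 1 = 1 := by
  rw [labs_of_ne_zero one_ne_zero, HahnSeries.order_one, neg_zero, zpow_zero]

lemma labs_neg (x : LaurentSeries Fq) : labs Fq (-x) = labs Fq x := by
  rcases eq_or_ne x 0 with rfl | hx
  · rw [neg_zero]
  · rw [labs_of_ne_zero (neg_ne_zero.mpr hx), labs_of_ne_zero hx, HahnSeries.order_neg]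

lemma labs_mul (x y : LaurentSeries Fq) : labs Fq (x * y) = labs Fq x * labs Fq y := by
  rcases eq_or_ne x 0 with rfl | hx
  · rw [zero_mul, labs_zero, zero_mul]
  rcases eq_or_ne y 0 with rfl | hy
  · rw [mul_zero, labs_zero, mul_zero]
  rw [labs_of_ne_zero hx, labs_of_ne_zero hy, labs_of_ne_zero (mul_ne_zero hx hy),
    HahnSeries.order_mul hx hy, neg_add, zpow_add₀ (by positivity)]

lemma labs_neg_one_pow (n : ℕ) : labs Fq ((-1) ^ n) = 1 := by
  rcases neg_one_pow_eq_or (LaurentSeries Fq) n with h | h <;>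
    rw [h] <;> simp only [labs_neg, labs_one]

lemma isNonarchimedean_labs : IsNonarchimedean (labs Fq) := by
  intro x y
  rcases eq_or_ne x 0 with rfl | hx
  · rw [zero_add]; exact le_max_right _ _
  rcases eq_or_ne y 0 with rfl | hy
  · rw [add_zero]; exact le_max_left _ _
  rcases eq_or_ne (x + y) 0 with hxy | hxy
  · rw [hxy, labs_zero]; exact le_max_of_le_left (labs_nonneg x)
  have hmin := HahnSeries.min_order_le_order_add hxy
  rw [labs_of_ne_zero hx, labs_of_ne_zero hy, labs_of_ne_zero hxy]
  have hq := one_lt_card_real (Fq := Fq)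
  rcases le_total x.order y.order with h | h
  · rw [min_eq_left h] at hmin
    exact le_max_of_le_left (zpow_le_zpow_right₀ hq.le (neg_le_neg hmin))
  · rw [min_eq_right h] at hmin
    exact le_max_of_le_right (zpow_le_zpow_right₀ hq.le (neg_le_neg hmin))

lemma labs_add_eq_max_of_ne {x y : LaurentSeries Fq} (h : labs Fq x ≠ labs Fq y) :
    labs Fq (x + y) = max (labs Fq x) (labs Fq y) :=
  IsNonarchimedean.add_eq_max_of_ne' _ isNonarchimedean_labs (fun a => (labs_neg a).symm) h

lemma labs_add_eq_left_of_lt {x y : LaurentSeries Fq} (h : labs Fq y < labs Fq x) :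
    labs Fq (x + y) = labs Fq x := by
  rw [labs_add_eq_max_of_ne h.ne', max_eq_left h.le]

end LaurentAbs

section PolyToL

variable {Fq : Type} [Field Fq]

lemma polyToL_eq_eval₂RingHom :
    polyToL Fq = eval₂RingHom (HahnSeries.C : Fq →+* LaurentSeries Fq) (Tel Fq) := rfl

lemma polyToL_add (P Q : Fq[X]) : polyToL Fq (P + Q) = polyToL Fq P + polyToL Fq Q :=
  map_add (eval₂RingHom _ _) P Q

lemma polyToL_mul (P Q : Fq[X]) : polyToL Fq (P * Q) = polyToL Fq P * polyToL Fq Q :=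
  map_mul (eval₂RingHom _ _) P Q

lemma polyToL_neg (P : Fq[X]) : polyToL Fq (-P) = -polyToL Fq P :=
  map_neg (eval₂RingHom _ _) P

lemma polyToL_zero : polyToL Fq 0 = 0 := map_zero (eval₂RingHom _ _)

lemma polyToL_one : polyToL Fq 1 = 1 := map_one (eval₂RingHom _ _)

lemma polyToL_neg_one_pow (n : ℕ) : polyToL Fq ((-1) ^ n) = (-1) ^ n := by
  rw [polyToL_eq_eval₂RingHom, map_pow, map_neg, map_one]

lemma polyToL_monomial (n : ℕ) (a : Fq) :
    polyToL Fq (monomial n a) = HahnSeries.single (-(n : ℤ)) a := by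
  rw [polyToL, eval₂_monomial, Tel, HahnSeries.single_pow, HahnSeries.C_apply,
    HahnSeries.single_mul_single]
  simp

lemma coeff_polyToL (P : Fq[X]) (n : ℕ) : (polyToL Fq P).coeff (-(n : ℤ)) = P.coeff n := by
  induction P using Polynomial.induction_on' with
  | add P Q hP hQ => rw [polyToL_add, HahnSeries.coeff_add, hP, hQ, coeff_add]
  | monomial m a => simp [polyToL_monomial, HahnSeries.coeff_single, coeff_monomial, eq_comm]

lemma coeff_polyToL_natDegree_ne_zero {P : Fq[X]} (hP : P ≠ 0) :
    (polyToL Fq P).coeff (-(P.natDegree : ℤ)) ≠ 0 := by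
  rw [coeff_polyToL]; exact leadingCoeff_ne_zero.mpr hP

lemma polyToL_ne_zero {P : Fq[X]} (hP : P ≠ 0) : polyToL Fq P ≠ 0 :=
  HahnSeries.ne_zero_of_coeff_ne_zero (coeff_polyToL_natDegree_ne_zero hP)

lemma order_polyToL {P : Fq[X]} (hP : P ≠ 0) : (polyToL Fq P).order = -(P.natDegree : ℤ) := by
  refine le_antisymm (HahnSeries.order_le_of_coeff_ne_zero (coeff_polyToL_natDegree_ne_zero hP))
    (not_lt.mp fun hlt => ?_)
  have hnz : (polyToL Fq P).coeff (polyToL Fq P).order ≠ 0 :=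
    mt HahnSeries.coeff_order_eq_zero.mp (polyToL_ne_zero hP)
  obtain ⟨n, hn⟩ : ∃ n : ℕ, (polyToL Fq P).order = -(n : ℤ) :=
    ⟨(-(polyToL Fq P).order).toNat, by omega⟩
  rw [hn, coeff_polyToL] at hnz
  exact hnz (coeff_eq_zero_of_natDegree_lt (by omega))

variable [Fintype Fq]

lemma labs_polyToL {P : Fq[X]} (hP : P ≠ 0) :
    labs Fq (polyToL Fq P) = (Fintype.card Fq : ℝ) ^ P.natDegree := by
  rw [labs_of_ne_zero (polyToL_ne_zero hP), order_polyToL hP, neg_neg, zpow_natCast]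

lemma one_le_labs_polyToL {P : Fq[X]} (hP : P ≠ 0) : 1 ≤ labs Fq (polyToL Fq P) := by
  rw [labs_polyToL hP]; exact one_le_pow₀ one_lt_card_real.le

lemma one_lt_labs_polyToL {P : Fq[X]} (hP : 0 < P.natDegree) : 1 < labs Fq (polyToL Fq P) := by
  rw [labs_polyToL (ne_zero_of_natDegree_gt hP)]; exact one_lt_pow₀ one_lt_card_real hP.ne'

end PolyToL

section ContinuedFraction

variable {Fq : Type} [Field Fq] (C : ℕ → Fq[X])

lemma cfNum_mul_cfDen_sub_cfNum_mul_cfDen (n : ℕ) :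
    cfNum Fq C (n + 1) * cfDen Fq C (n + 2) - cfNum Fq C (n + 2) * cfDen Fq C (n + 1)
      = (-1) ^ n := by
  induction n with
  | zero => simp [cfNum, cfDen]
  | succ n ih =>
    simp only [cfNum, cfDen] at ih ⊢
    linear_combination -ih

lemma det_cfM (k : ℕ) : (cfM Fq C k).det = 1 := by
  have hsq : ((-1 : Fq[X]) ^ k) ^ 2 = 1 := by rw [← pow_mul, pow_mul', neg_one_sq, one_pow]
  rw [cfM, Matrix.det_fin_two_of]
  linear_combination (-1) ^ k * cfNum_mul_cfDen_sub_cfNum_mul_cfDen C k + hsq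

end ContinuedFraction

section ContinuedFractionAbs

variable {Fq : Type} [Field Fq] [Fintype Fq] {C : ℕ → Fq[X]}

lemma labs_cfDen_lt_labs_cfDen (hdeg : ∀ i, 1 ≤ i → 0 < (C i).natDegree) (n : ℕ) :
    labs Fq (polyToL Fq (cfDen Fq C (n + 1))) < labs Fq (polyToL Fq (cfDen Fq C (n + 2))) := by
  induction n with
  | zero => simp [cfDen, polyToL_zero, polyToL_one, labs_zero, labs_one]
  | succ n ih =>
    have hpos : 0 < labs Fq (polyToL Fq (cfDen Fq C (n + 2))) := (labs_nonneg _).trans_lt ih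
    have hgrow : labs Fq (polyToL Fq (cfDen Fq C (n + 2)))
        < labs Fq (polyToL Fq (C (n + 1) * cfDen Fq C (n + 2))) := by
      rw [polyToL_mul, labs_mul]
      exact lt_mul_of_one_lt_left hpos (one_lt_labs_polyToL (hdeg (n + 1) (by omega)))
    rwa [show cfDen Fq C (n + 3) = C (n + 1) * cfDen Fq C (n + 2) + cfDen Fq C (n + 1) from rfl,
      polyToL_add, labs_add_eq_left_of_lt (ih.trans hgrow)]

/-- Extends `HasCF` to `n = -1`, where `Q₋₁ ξ - P₋₁ = -1`. -/
lemma labs_cfDen_mul_sub_cfNum {ξ : LaurentSeries Fq} (hcf : HasCF Fq ξ C) (n : ℕ) :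
    labs Fq (polyToL Fq (cfDen Fq C (n + 1)) * ξ - polyToL Fq (cfNum Fq C (n + 1)))
      = (labs Fq (polyToL Fq (cfDen Fq C (n + 2))))⁻¹ := by
  cases n with
  | zero => simp [cfDen, cfNum, polyToL_zero, polyToL_one, labs_neg, labs_one]
  | succ n => exact hcf n

end ContinuedFractionAbs

lemma Matrix.SpecialLinearGroup.exists_apply_one_ne_zero {R : Type*} [CommRing R] [Nontrivial R]
    (D : Matrix.SpecialLinearGroup (Fin 2) R) : ∃ i, D i 1 ≠ 0 := by
  by_contra! h
  have hdet := D.det_coe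
  rw [Matrix.det_fin_two, h 0, h 1] at hdet
  simp at hdet

section Action

variable {Fq : Type} [Field Fq]

def cfSL (C : ℕ → Fq[X]) (k : ℕ) : SL2 Fq := ⟨cfM Fq C k, det_cfM C k⟩

lemma act_mul (γ δ : SL2 Fq) (v : Fin 2 → LaurentSeries Fq) :
    act Fq (γ * δ) v = act Fq γ (act Fq δ v) := by
  simp only [act, Matrix.SpecialLinearGroup.coe_mul, polyToL_eq_eval₂RingHom, Matrix.map_mul,
    Matrix.mulVec_mulVec]

lemma act_apply (γ : SL2 Fq) (v : Fin 2 → LaurentSeries Fq) (i : Fin 2) :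
    act Fq γ v i = polyToL Fq (γ i 0) * v 0 + polyToL Fq (γ i 1) * v 1 := by
  simp [act, Matrix.mulVec, dotProduct, Fin.sum_univ_two]

lemma act_cfSL (C : ℕ → Fq[X]) (k : ℕ) (ξ : LaurentSeries Fq) :
    act Fq (cfSL C k) ![ξ, 1] =
      ![polyToL Fq (cfDen Fq C (k + 2)) * ξ - polyToL Fq (cfNum Fq C (k + 2)),
        (-1) ^ (k + 1) *
          (polyToL Fq (cfDen Fq C (k + 1)) * ξ - polyToL Fq (cfNum Fq C (k + 1)))] := by
  funext i
  fin_cases i <;> rw [act_apply] <;>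
    simp [cfSL, cfM, polyToL_mul, polyToL_neg, polyToL_neg_one_pow] <;> ring

lemma mul_cfSL_apply_zero (D : SL2 Fq) (C : ℕ → Fq[X]) (k : ℕ) (i : Fin 2) :
    (D * cfSL C k) i 0
      = D i 0 * cfDen Fq C (k + 2) + D i 1 * ((-1) ^ (k + 1) * cfDen Fq C (k + 1)) := by
  rw [Matrix.SpecialLinearGroup.coe_mul, Matrix.mul_apply, Fin.sum_univ_two]
  simp [cfSL, cfM]

variable [Fintype Fq]

lemma labs_polyToL_apply_le_gabs (γ : SL2 Fq) (i j : Fin 2) :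
    labs Fq (polyToL Fq (γ i j)) ≤ gabs Fq γ := by
  fin_cases i <;> fin_cases j <;> simp [gabs, matAbs]

lemma labs_apply_le_vabs (v : Fin 2 → LaurentSeries Fq) (i : Fin 2) :
    labs Fq (v i) ≤ vabs Fq v := by
  fin_cases i <;> simp [vabs]

end Action

/-- The ultrametric core of the argument: `(u, w)` plays the role of `M_k (ξ, 1)ᵀ` and `(a, b)`
that of the first column `(Q_k, ±Q_{k-1})` of `M_k`, and `(r, s)` is a row of `γ M_k⁻¹`. -/
lemma inv_labs_le_labs_add {Fq : Type} [Field Fq] [Fintype Fq] {r s a b u w : LaurentSeries Fq}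
    {B : ℝ} (hs : 1 ≤ labs Fq s) (hba : labs Fq b < labs Fq a) (haB : labs Fq a ≤ B)
    (hu : labs Fq u = B⁻¹) (hw : labs Fq w = (labs Fq a)⁻¹)
    (hcol : labs Fq (r * a + s * b) < B) :
    (labs Fq a)⁻¹ ≤ labs Fq (r * u + s * w) := by
  have ha : 0 < labs Fq a := (labs_nonneg b).trans_lt hba
  have hB : 0 < B := ha.trans_le haB
  have hsw : (labs Fq a)⁻¹ ≤ labs Fq (s * w) := by
    rw [labs_mul, hw]; exact le_mul_of_one_le_left (by positivity) hs
  by_cases heq : labs Fq (r * u) = labs Fq (s * w)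
  · exfalso
    have hra : labs Fq (r * a) = labs Fq s * B := by
      rw [labs_mul, hu, labs_mul, hw] at heq
      rw [labs_mul]; field_simp at heq ⊢; linarith
    have hsb : labs Fq (s * b) < labs Fq (r * a) := by
      rw [hra, labs_mul]
      exact mul_lt_mul_of_pos_left (hba.trans_le haB) (zero_lt_one.trans_le hs)
    rw [labs_add_eq_left_of_lt hsb, hra] at hcol
    nlinarith
  · rw [labs_add_eq_max_of_ne heq]
    exact hsw.trans (le_max_right _ _)

theorem stmt14 (ξ : LaurentSeries Fq)
    (C : ℕ → Polynomial Fq) (hdeg : ∀ i, 1 ≤ i → 0 < (C i).natDegree)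
    (hcf : HasCF Fq ξ C) (k : ℕ) (γ : SL2 Fq)
    (hγ : gabs Fq γ < labs Fq (polyToL Fq (cfDen Fq C (k + 3)))) :
    (labs Fq (polyToL Fq (cfDen Fq C (k + 2))))⁻¹ ≤ vabs Fq (act Fq γ ![ξ, 1]) := by
  set D := γ * (cfSL C k)⁻¹
  have hγD : γ = D * cfSL C k := by simp [D]
  obtain ⟨i, hi⟩ := D.exists_apply_one_ne_zero
  have hcol : labs Fq (polyToL Fq (D i 0) * polyToL Fq (cfDen Fq C (k + 2))
      + polyToL Fq (D i 1) * polyToL Fq ((-1) ^ (k + 1) * cfDen Fq C (k + 1)))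
      < labs Fq (polyToL Fq (cfDen Fq C (k + 3))) := by
    rw [← polyToL_mul, ← polyToL_mul, ← polyToL_add, ← mul_cfSL_apply_zero, ← hγD]
    exact (labs_polyToL_apply_le_gabs γ i 0).trans_lt hγ
  have hw : labs Fq ((-1) ^ (k + 1) * (polyToL Fq (cfDen Fq C (k + 1)) * ξ
      - polyToL Fq (cfNum Fq C (k + 1)))) = (labs Fq (polyToL Fq (cfDen Fq C (k + 2))))⁻¹ := by
    rw [labs_mul, labs_neg_one_pow, one_mul, labs_cfDen_mul_sub_cfNum hcf]
  have hb : labs Fq (polyToL Fq ((-1) ^ (k + 1) * cfDen Fq C (k + 1)))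
      < labs Fq (polyToL Fq (cfDen Fq C (k + 2))) := by
    rw [polyToL_mul, labs_mul, polyToL_neg_one_pow, labs_neg_one_pow, one_mul]
    exact labs_cfDen_lt_labs_cfDen hdeg k
  calc (labs Fq (polyToL Fq (cfDen Fq C (k + 2))))⁻¹
      ≤ labs Fq (act Fq γ ![ξ, 1] i) := by
        rw [hγD, act_mul, act_cfSL, act_apply]
        exact inv_labs_le_labs_add (one_le_labs_polyToL hi) hb
          (labs_cfDen_lt_labs_cfDen hdeg (k + 1)).le (hcf k) hw hcol
    _ ≤ vabs Fq (act Fq γ ![ξ, 1]) := labs_apply_le_vabs _ i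

end
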